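/- (Approximate-subgradient error decomposition) Fix λ > 0, c > 1, and X̄_S, X̄_L ∈ ℝ^{m×n}, with Ω̄ = Ω(X̄_S), T̄ = T(X̄_L). Suppose Q ∈ ℝ^{m×n} is simultaneously a subgradient of λ‖·‖_{ℓ1} at X̄_S and of the trace norm ‖·‖_* at X̄_L, and satisfies ‖P_{Ω̄⊥}(Q)‖_{ℓ∞} ≤ λ/c and ‖P_{T̄⊥}(Q)‖_{2→2} ≤ 1/c. Then for all X_S, X_L: λ‖X_S‖_{ℓ1} + ‖X_L‖_* − λ‖X̄_S‖_{ℓ1} − ‖X̄_L‖_* ≥ ⟨Q, X_S + X_L − X̄_S − X̄_L⟩ + (1 − 1/c)(λ‖P_{Ω̄⊥}(X_S − X̄_S)‖_{ℓ1} + ‖P_{T̄⊥}(X_L − X̄_L)‖_*). -/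

import Mathlib

/-!
Both halves split along an orthogonal projection for the trace inner product.

For the `ℓ₁` part, `‖X_S‖₁ = ‖P_Ω X_S‖₁ + ‖P_Ω⊥ (X_S - X̄_S)‖₁`; the subgradient inequality at
`P_Ω X_S` controls the first summand, and Hölder with `‖P_Ω⊥ Q‖_∞ ≤ λ/c` the pairing of `Q` with
the second.

For the trace-norm part, write `X̄_L = U diag(σ) Vᵀ` and `Δ = X_L - X̄_L`. Duality between the
spectral and the trace norm turns the subgradient condition into `‖Q‖ ≤ 1` and
`∑ σᵢ ≤ ‖X̄_L‖_* ≤ ⟨Q, X̄_L⟩ = ∑ σᵢ uᵢᵀ Q vᵢ`, so `σ > 0` forces `uᵢᵀ Q vᵢ = 1`, hence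
`Q vᵢ = uᵢ`, `Qᵀ uᵢ = vᵢ` and `P_T Q = U Vᵀ`. The polar factor `W` of `P_T⊥ Δ` is killed by
`P_T`, so `‖U Vᵀ + W‖ ≤ 1`, and pairing `X_L` with `U Vᵀ + W` gives
`‖X_L‖_* ≥ ‖X̄_L‖_* + ⟨U Vᵀ, Δ⟩ + ‖P_T⊥ Δ‖_*`. It remains to bound
`⟨Q, Δ⟩ = ⟨U Vᵀ, Δ⟩ + ⟨P_T⊥ Q, P_T⊥ Δ⟩` using `‖P_T⊥ Q‖ ≤ 1/c`.
-/

open scoped BigOperators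
open Matrix
noncomputable section

namespace SLR

/-- Trace inner product `⟨A,B⟩ = tr(AᵀB)`. -/
def inner' {m n : ℕ} (A B : Matrix (Fin m) (Fin n) ℝ) : ℝ := ∑ i, ∑ j, A i j * B i j

/-- Entrywise 1-norm. -/
def l1 {m n : ℕ} (M : Matrix (Fin m) (Fin n) ℝ) : ℝ := ∑ i, ∑ j, |M i j|

/-- Entrywise ∞-norm (maximum absolute value of an entry). -/
def linf {m n : ℕ} (M : Matrix (Fin m) (Fin n) ℝ) : ℝ := ⨆ i, ⨆ j, |M i j|

/-- Frobenius norm. -/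
def frob {m n : ℕ} (M : Matrix (Fin m) (Fin n) ℝ) : ℝ :=
  Real.sqrt (∑ i, ∑ j, (M i j) ^ 2)

/-- `‖M‖_{1→1}`: maximum column absolute sum. -/
def n11 {m n : ℕ} (M : Matrix (Fin m) (Fin n) ℝ) : ℝ := ⨆ j, ∑ i, |M i j|

/-- `‖M‖_{∞→∞}`: maximum row absolute sum. -/
def nII {m n : ℕ} (M : Matrix (Fin m) (Fin n) ℝ) : ℝ := ⨆ i, ∑ j, |M i j|

/-- Spectral norm `‖M‖_{2→2}`. -/
def spec {m n : ℕ} (M : Matrix (Fin m) (Fin n) ℝ) : ℝ :=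
  ‖LinearMap.toContinuousLinearMap (Matrix.toEuclideanLin M)‖

/-- Trace (nuclear) norm: sum of singular values. -/
def traceNorm {m n : ℕ} (M : Matrix (Fin m) (Fin n) ℝ) : ℝ :=
  ∑ i, Real.sqrt ((Matrix.isHermitian_conjTranspose_mul_self M).eigenvalues i)

/-- The hybrid norm `‖M‖_{♯(ρ)} = max{ρ‖M‖_{1→1}, ρ⁻¹‖M‖_{∞→∞}}`. -/
def sharp {m n : ℕ} (ρ : ℝ) (M : Matrix (Fin m) (Fin n) ℝ) : ℝ :=
  max (ρ * n11 M) (ρ⁻¹ * nII M)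

/-- The dual norm `‖·‖_{♭(ρ)}` of `‖·‖_{♯(ρ)}`. -/
def flat {m n : ℕ} (ρ : ℝ) (M : Matrix (Fin m) (Fin n) ℝ) : ℝ :=
  sSup {x : ℝ | ∃ N : Matrix (Fin m) (Fin n) ℝ, sharp ρ N ≤ 1 ∧ x = inner' M N}

/-- Induced operator norm of a map `T` with respect to the norm `f`. -/
def opNormWrt {m n : ℕ} (f : Matrix (Fin m) (Fin n) ℝ → ℝ)
    (T : Matrix (Fin m) (Fin n) ℝ → Matrix (Fin m) (Fin n) ℝ) : ℝ :=
  sSup {x : ℝ | ∃ M, f M ≤ 1 ∧ x = f (T M)}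

/-- Entrywise sign matrix. -/
def signM {m n : ℕ} (M : Matrix (Fin m) (Fin n) ℝ) : Matrix (Fin m) (Fin n) ℝ :=
  Matrix.of fun i j => Real.sign (M i j)

/-- Orthogonal projection onto matrices supported on `supp X`. -/
def POmega {m n : ℕ} (X : Matrix (Fin m) (Fin n) ℝ) (M : Matrix (Fin m) (Fin n) ℝ) :
    Matrix (Fin m) (Fin n) ℝ :=
  Matrix.of fun i j => if X i j ≠ 0 then M i j else 0

/-- Orthogonal projection onto the tangent space `T` determined by `U`, `V`. -/
def PT {m n r : ℕ} (U : Matrix (Fin m) (Fin r) ℝ) (V : Matrix (Fin n) (Fin r) ℝ)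
    (M : Matrix (Fin m) (Fin n) ℝ) : Matrix (Fin m) (Fin n) ℝ :=
  U * Uᵀ * M + M * (V * Vᵀ) - U * Uᵀ * M * (V * Vᵀ)

/-- `‖U‖_{2→∞}`: maximum row Euclidean norm. -/
def two2inf {m r : ℕ} (U : Matrix (Fin m) (Fin r) ℝ) : ℝ :=
  ⨆ i, Real.sqrt (∑ k, (U i k) ^ 2)

/-- The sparsity measure `α(ρ)` of `X̄_S`. -/
def alpha {m n : ℕ} (X : Matrix (Fin m) (Fin n) ℝ) (ρ : ℝ) : ℝ :=
  max (ρ * n11 (signM X)) (ρ⁻¹ * nII (signM X))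

/-- The incoherence measure `β(ρ)` of the singular vectors `U`, `V`. -/
def beta {m n r : ℕ} (U : Matrix (Fin m) (Fin r) ℝ) (V : Matrix (Fin n) (Fin r) ℝ)
    (ρ : ℝ) : ℝ :=
  ρ⁻¹ * linf (U * Uᵀ) + ρ * linf (V * Vᵀ) + two2inf U * two2inf V

/-- Number of nonzero entries. -/
def suppCard {m n : ℕ} (X : Matrix (Fin m) (Fin n) ℝ) : ℕ :=
  (Finset.univ.filter fun p : Fin m × Fin n => X p.1 p.2 ≠ 0).card

open scoped Matrix.Norms.L2Operator
open WithLp (toLp)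

variable {m n r k : ℕ}

section Vectors

lemma dotProduct_self_nonneg (x : Fin n → ℝ) : 0 ≤ x ⬝ᵥ x :=
  dotProduct_self_star_nonneg x

lemma norm_toLp_eq_sqrt (x : Fin n → ℝ) : ‖toLp 2 x‖ = √(x ⬝ᵥ x) := by
  simp [EuclideanSpace.norm_eq, dotProduct, sq]

lemma norm_toLp_sq (x : Fin n → ℝ) : ‖toLp 2 x‖ ^ 2 = x ⬝ᵥ x := by
  rw [norm_toLp_eq_sqrt, Real.sq_sqrt (dotProduct_self_nonneg x)]

lemma dotProduct_le_norm_mul_norm (x y : Fin n → ℝ) : x ⬝ᵥ y ≤ ‖toLp 2 x‖ * ‖toLp 2 y‖ := by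
  simpa [EuclideanSpace.inner_toLp_toLp, dotProduct_comm] using
    real_inner_le_norm (toLp 2 x) (toLp 2 y)

lemma col_mul (A : Matrix (Fin m) (Fin n) ℝ) (P : Matrix (Fin n) (Fin k) ℝ) (j : Fin k) :
    (A * P)ᵀ j = A *ᵥ Pᵀ j := rfl

lemma mulVec_dotProduct_mulVec (M : Matrix (Fin m) (Fin r) ℝ) (N : Matrix (Fin m) (Fin n) ℝ)
    (u : Fin r → ℝ) (v : Fin n → ℝ) : (M *ᵥ u) ⬝ᵥ (N *ᵥ v) = u ⬝ᵥ ((Mᵀ * N) *ᵥ v) := by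
  rw [← Matrix.mulVec_mulVec, Matrix.dotProduct_mulVec u, Matrix.vecMul_transpose]

lemma diag_transpose_mul_mul (U : Matrix (Fin m) (Fin r) ℝ) (Q : Matrix (Fin m) (Fin n) ℝ)
    (V : Matrix (Fin n) (Fin r) ℝ) (i : Fin r) : (Uᵀ * Q * V) i i = Uᵀ i ⬝ᵥ (Q *ᵥ Vᵀ i) := by
  rw [Matrix.mul_assoc, Matrix.mul_apply']
  rfl

lemma norm_col (A : Matrix (Fin m) (Fin n) ℝ) (j : Fin n) :
    ‖toLp 2 (Aᵀ j)‖ = √((Aᵀ * A) j j) := by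
  rw [norm_toLp_eq_sqrt, Matrix.mul_apply']
  rfl

lemma norm_col_eq_one {U : Matrix (Fin m) (Fin r) ℝ} (hU : Uᵀ * U = 1) (i : Fin r) :
    ‖toLp 2 (Uᵀ i)‖ = 1 := by
  rw [norm_col, hU, Matrix.one_apply_eq, Real.sqrt_one]

lemma eq_of_norm_le_one_of_dotProduct_eq_one {a b : Fin k → ℝ} (ha : ‖toLp 2 a‖ ≤ 1)
    (hb : ‖toLp 2 b‖ = 1) (hab : b ⬝ᵥ a = 1) : a = b := by
  have haa : a ⬝ᵥ a ≤ 1 := by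
    rw [← norm_toLp_sq]; nlinarith [norm_nonneg (toLp 2 a)]
  have hbb : b ⬝ᵥ b = 1 := by rw [← norm_toLp_sq, hb, one_pow]
  have h : (a - b) ⬝ᵥ (a - b) ≤ 0 := by
    simp only [sub_dotProduct, dotProduct_sub, dotProduct_comm a b]
    linarith
  exact sub_eq_zero.mp (dotProduct_self_eq_zero.mp (le_antisymm h (dotProduct_self_nonneg _)))

end Vectors

section L2OpNorm

lemma spec_eq_l2_opNorm (A : Matrix (Fin m) (Fin n) ℝ) : spec A = ‖A‖ := rfl

lemma norm_mulVec_le (A : Matrix (Fin m) (Fin n) ℝ) (x : Fin n → ℝ) :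
    ‖toLp 2 (A *ᵥ x)‖ ≤ ‖A‖ * ‖toLp 2 x‖ :=
  A.l2_opNorm_mulVec (toLp 2 x)

lemma l2_opNorm_le_of_norm_mulVec_le {A : Matrix (Fin m) (Fin n) ℝ} {s : ℝ} (hs : 0 ≤ s)
    (h : ∀ x, ‖toLp 2 (A *ᵥ x)‖ ≤ s * ‖toLp 2 x‖) : ‖A‖ ≤ s :=
  ContinuousLinearMap.opNorm_le_bound _ hs fun x => h x.ofLp

lemma l2_opNorm_le_one_of_transpose_mul_self_eq_diagonal {A : Matrix (Fin m) (Fin n) ℝ}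
    {d : Fin n → ℝ} (hA : Aᵀ * A = Matrix.diagonal d) (hd : ∀ j, |d j| ≤ 1) : ‖A‖ ≤ 1 := by
  have h : ‖A‖ * ‖A‖ ≤ 1 := by
    rw [← Matrix.l2_opNorm_conjTranspose_mul_self, Matrix.conjTranspose_eq_transpose_of_trivial, hA,
      Matrix.l2_opNorm_diagonal]
    exact (pi_norm_le_iff_of_nonneg zero_le_one).mpr fun j => (Real.norm_eq_abs _).trans_le (hd j)
  nlinarith [norm_nonneg A]

lemma l2_opNorm_le_one_of_transpose_mul_self {U : Matrix (Fin m) (Fin r) ℝ} (hU : Uᵀ * U = 1) :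
    ‖U‖ ≤ 1 :=
  l2_opNorm_le_one_of_transpose_mul_self_eq_diagonal (hU.trans Matrix.diagonal_one.symm)
    fun _ => abs_one.le

lemma l2_opNorm_transpose (A : Matrix (Fin m) (Fin n) ℝ) : ‖Aᵀ‖ = ‖A‖ := by
  rw [← Matrix.conjTranspose_eq_transpose_of_trivial, Matrix.l2_opNorm_conjTranspose]

end L2OpNorm

section Frobenius

lemma inner'_eq_trace (A B : Matrix (Fin m) (Fin n) ℝ) : inner' A B = (Aᵀ * B).trace := by
  simp only [inner', Matrix.trace, Matrix.diag, Matrix.mul_apply, Matrix.transpose_apply]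
  exact Finset.sum_comm

lemma inner'_add_left (A B C : Matrix (Fin m) (Fin n) ℝ) :
    inner' (A + B) C = inner' A C + inner' B C := by
  simp [inner', add_mul, Finset.sum_add_distrib]

lemma inner'_add_right (A B C : Matrix (Fin m) (Fin n) ℝ) :
    inner' A (B + C) = inner' A B + inner' A C := by
  simp [inner', mul_add, Finset.sum_add_distrib]

lemma inner'_sub_left (A B C : Matrix (Fin m) (Fin n) ℝ) :
    inner' (A - B) C = inner' A C - inner' B C := by
  simp [inner', sub_mul, Finset.sum_sub_distrib]

lemma inner'_sub_right (A B C : Matrix (Fin m) (Fin n) ℝ) :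
    inner' A (B - C) = inner' A B - inner' A C := by
  simp [inner', mul_sub, Finset.sum_sub_distrib]

@[simp] lemma inner'_zero_left (A : Matrix (Fin m) (Fin n) ℝ) : inner' 0 A = 0 := by
  simp [inner']

@[simp] lemma inner'_zero_right (A : Matrix (Fin m) (Fin n) ℝ) : inner' A 0 = 0 := by
  simp [inner']

lemma inner'_eq_sum_dotProduct_col (A B : Matrix (Fin m) (Fin n) ℝ) :
    inner' A B = ∑ j, Aᵀ j ⬝ᵥ Bᵀ j := by
  simp only [inner', dotProduct, Matrix.transpose_apply]
  exact Finset.sum_comm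

lemma inner'_mul_left (L : Matrix (Fin m) (Fin m) ℝ) (A B : Matrix (Fin m) (Fin n) ℝ) :
    inner' (L * A) B = inner' A (Lᵀ * B) := by
  rw [inner'_eq_trace, inner'_eq_trace, Matrix.transpose_mul, Matrix.mul_assoc]

lemma inner'_mul_right (R : Matrix (Fin n) (Fin n) ℝ) (A B : Matrix (Fin m) (Fin n) ℝ) :
    inner' (A * R) B = inner' A (B * Rᵀ) := by
  rw [inner'_eq_trace, inner'_eq_trace, Matrix.transpose_mul, Matrix.mul_assoc,
    Matrix.trace_mul_comm, Matrix.mul_assoc, Matrix.trace_mul_comm]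

lemma inner'_mul_mul_of_mul_transpose_eq_one {P : Matrix (Fin n) (Fin n) ℝ} (hP : P * Pᵀ = 1)
    (A B : Matrix (Fin m) (Fin n) ℝ) : inner' (A * P) (B * P) = inner' A B := by
  rw [inner'_mul_right, Matrix.mul_assoc, hP, Matrix.mul_one]

lemma inner'_vecMulVec (A : Matrix (Fin m) (Fin n) ℝ) (x : Fin m → ℝ) (y : Fin n → ℝ) :
    inner' A (Matrix.vecMulVec x y) = x ⬝ᵥ (A *ᵥ y) := by
  simp only [inner', Matrix.vecMulVec_apply, dotProduct, Matrix.mulVec, Finset.mul_sum]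
  exact Finset.sum_congr rfl fun i _ => Finset.sum_congr rfl fun j _ => by ring

lemma inner'_mul_diagonal_mul (Z : Matrix (Fin m) (Fin n) ℝ) (U : Matrix (Fin m) (Fin r) ℝ)
    (σ : Fin r → ℝ) (V : Matrix (Fin n) (Fin r) ℝ) :
    inner' Z (U * Matrix.diagonal σ * Vᵀ) = ∑ i, σ i * (Uᵀ * Z * V) i i := by
  have h : Vᵀ * (Zᵀ * U) = (Uᵀ * Z * V)ᵀ := by
    simp only [Matrix.transpose_mul, Matrix.transpose_transpose, Matrix.mul_assoc]
  rw [inner'_eq_trace, ← Matrix.mul_assoc, ← Matrix.mul_assoc, Matrix.trace_mul_cycle, h]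
  simp only [Matrix.trace, Matrix.diag, Matrix.mul_diagonal, Matrix.transpose_apply, mul_comm (σ _)]

end Frobenius

section SingularValues

abbrev sqSingularValues (B : Matrix (Fin m) (Fin n) ℝ) : Fin n → ℝ :=
  (Matrix.isHermitian_conjTranspose_mul_self B).eigenvalues

abbrev rightSingularVectors (B : Matrix (Fin m) (Fin n) ℝ) : Matrix (Fin n) (Fin n) ℝ :=
  (Matrix.isHermitian_conjTranspose_mul_self B).eigenvectorUnitary

variable (B : Matrix (Fin m) (Fin n) ℝ)

lemma traceNorm_eq_sum_sqrt : traceNorm B = ∑ j, √(sqSingularValues B j) := rfl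

lemma rightSingularVectors_transpose_mul_self :
    (rightSingularVectors B)ᵀ * rightSingularVectors B = 1 := by
  rw [← Matrix.conjTranspose_eq_transpose_of_trivial, ← Matrix.star_eq_conjTranspose]
  exact Unitary.coe_star_mul_self _

lemma rightSingularVectors_mul_transpose_self :
    rightSingularVectors B * (rightSingularVectors B)ᵀ = 1 := by
  rw [← Matrix.conjTranspose_eq_transpose_of_trivial, ← Matrix.star_eq_conjTranspose]
  exact Unitary.coe_mul_star_self _

lemma transpose_rightSingularVectors_mul_mul :
    (rightSingularVectors B)ᵀ * (Bᵀ * B) * rightSingularVectors B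
      = Matrix.diagonal (sqSingularValues B) := by
  have h := (Matrix.isHermitian_conjTranspose_mul_self B).conjStarAlgAut_star_eigenvectorUnitary
  rw [Unitary.conjStarAlgAut_star_apply] at h
  rw [← Matrix.conjTranspose_eq_transpose_of_trivial,
    ← Matrix.conjTranspose_eq_transpose_of_trivial B, ← Matrix.star_eq_conjTranspose, h]
  rfl

lemma norm_col_mul_rightSingularVectors (j : Fin n) :
    ‖toLp 2 ((B * rightSingularVectors B)ᵀ j)‖ = √(sqSingularValues B j) := by
  rw [norm_col, Matrix.transpose_mul, Matrix.mul_assoc, ← Matrix.mul_assoc Bᵀ,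
    ← Matrix.mul_assoc, transpose_rightSingularVectors_mul_mul, Matrix.diagonal_apply_eq]

end SingularValues

theorem inner'_le_l2_opNorm_mul_traceNorm (A B : Matrix (Fin m) (Fin n) ℝ) :
    inner' A B ≤ ‖A‖ * traceNorm B := by
  set P := rightSingularVectors B
  rw [← inner'_mul_mul_of_mul_transpose_eq_one (rightSingularVectors_mul_transpose_self B),
    inner'_eq_sum_dotProduct_col, traceNorm_eq_sum_sqrt, Finset.mul_sum]
  refine Finset.sum_le_sum fun j _ => (dotProduct_le_norm_mul_norm _ _).trans ?_
  rw [norm_col_mul_rightSingularVectors, col_mul]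
  gcongr
  calc ‖toLp 2 (A *ᵥ Pᵀ j)‖ ≤ ‖A‖ * ‖toLp 2 (Pᵀ j)‖ := norm_mulVec_le _ _
    _ = ‖A‖ := by rw [norm_col_eq_one (rightSingularVectors_transpose_mul_self B), mul_one]

/-- `B (BᵀB)^{-1/2}`; since `(√0)⁻¹ = 0` in Lean, this is the partial isometry of the polar
decomposition of `B`, vanishing on its kernel. -/
noncomputable def polarFactor (B : Matrix (Fin m) (Fin n) ℝ) : Matrix (Fin m) (Fin n) ℝ :=
  B * rightSingularVectors B * Matrix.diagonal (fun j => (√(sqSingularValues B j))⁻¹)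
    * (rightSingularVectors B)ᵀ

section PolarFactor

variable (B : Matrix (Fin m) (Fin n) ℝ)

lemma l2_opNorm_polarFactor_le_one : ‖polarFactor B‖ ≤ 1 := by
  set P := rightSingularVectors B
  set s := sqSingularValues B
  set M := B * P * Matrix.diagonal (fun j => (√(s j))⁻¹)
  have hMM : Mᵀ * M = Matrix.diagonal (fun j => (√(s j))⁻¹ * s j * (√(s j))⁻¹) := by
    rw [← Matrix.diagonal_mul_diagonal, ← Matrix.diagonal_mul_diagonal,
      ← transpose_rightSingularVectors_mul_mul]
    simp only [M, Matrix.transpose_mul, Matrix.diagonal_transpose, Matrix.mul_assoc]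
    rfl
  have hM : ‖M‖ ≤ 1 := by
    refine l2_opNorm_le_one_of_transpose_mul_self_eq_diagonal hMM fun j => ?_
    rw [← div_eq_inv_mul, Real.div_sqrt, ← div_eq_mul_inv, abs_of_nonneg (by positivity)]
    exact div_self_le_one _
  calc ‖M * Pᵀ‖ ≤ ‖M‖ * ‖Pᵀ‖ := Matrix.l2_opNorm_mul _ _
    _ ≤ 1 * 1 := by
        gcongr
        rw [l2_opNorm_transpose]
        exact l2_opNorm_le_one_of_transpose_mul_self (rightSingularVectors_transpose_mul_self B)
    _ = 1 := one_mul 1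

lemma inner'_polarFactor_self : inner' (polarFactor B) B = traceNorm B := by
  rw [polarFactor,
    ← inner'_mul_mul_of_mul_transpose_eq_one (rightSingularVectors_mul_transpose_self B),
    Matrix.mul_assoc _ _ (rightSingularVectors B), rightSingularVectors_transpose_mul_self,
    Matrix.mul_one, inner'_eq_trace, traceNorm_eq_sum_sqrt]
  have h : (B * rightSingularVectors B * Matrix.diagonal (fun j => (√(sqSingularValues B j))⁻¹))ᵀ
      * (B * rightSingularVectors B) = Matrix.diagonal (fun j => (√(sqSingularValues B j))⁻¹)
        * Matrix.diagonal (sqSingularValues B) := by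
    rw [← transpose_rightSingularVectors_mul_mul]
    simp only [Matrix.transpose_mul, Matrix.diagonal_transpose, Matrix.mul_assoc]
  rw [h, Matrix.diagonal_mul_diagonal, Matrix.trace_diagonal]
  exact Finset.sum_congr rfl fun j _ => by rw [← div_eq_inv_mul, Real.div_sqrt]

lemma mul_polarFactor_eq_zero {C : Matrix (Fin k) (Fin m) ℝ} (hC : C * B = 0) :
    C * polarFactor B = 0 := by
  simp only [polarFactor, ← Matrix.mul_assoc, hC, Matrix.zero_mul]

lemma polarFactor_mul_eq_zero {C : Matrix (Fin n) (Fin k) ℝ} (hC : B * C = 0) :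
    polarFactor B * C = 0 := by
  rw [polarFactor]
  set P := rightSingularVectors B
  set s := sqSingularValues B
  -- the pseudo-inverse square root of `Bᵀ * B` factors through `Bᵀ * B`
  have hμ : Matrix.diagonal (fun j => (√(s j))⁻¹)
      = Matrix.diagonal (fun j => (√(s j))⁻¹ / s j) * Matrix.diagonal s := by
    rw [Matrix.diagonal_mul_diagonal]
    congr 1
    funext j
    rcases eq_or_ne (s j) 0 with h | h
    · simp [h]
    · exact (div_mul_cancel₀ _ h).symm
  have hDP : Matrix.diagonal s * Pᵀ = Pᵀ * (Bᵀ * B) := by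
    rw [← transpose_rightSingularVectors_mul_mul, Matrix.mul_assoc _ P,
      rightSingularVectors_mul_transpose_self, Matrix.mul_one]
  calc B * P * Matrix.diagonal (fun j => (√(s j))⁻¹) * Pᵀ * C
      = B * P * Matrix.diagonal (fun j => (√(s j))⁻¹ / s j) * (Matrix.diagonal s * Pᵀ) * C := by
        rw [hμ]; simp only [Matrix.mul_assoc]
    _ = B * P * Matrix.diagonal (fun j => (√(s j))⁻¹ / s j) * Pᵀ * Bᵀ * (B * C) := by
        rw [hDP]; simp only [Matrix.mul_assoc]
    _ = 0 := by rw [hC, Matrix.mul_zero]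

end PolarFactor

lemma traceNorm_nonneg (B : Matrix (Fin m) (Fin n) ℝ) : 0 ≤ traceNorm B :=
  Finset.sum_nonneg fun _ _ => Real.sqrt_nonneg _

lemma inner'_le_traceNorm_of_l2_opNorm_le_one {W : Matrix (Fin m) (Fin n) ℝ} (hW : ‖W‖ ≤ 1)
    (B : Matrix (Fin m) (Fin n) ℝ) : inner' W B ≤ traceNorm B :=
  (inner'_le_l2_opNorm_mul_traceNorm W B).trans
    (mul_le_of_le_one_left (traceNorm_nonneg B) hW)

lemma traceNorm_add_le (A B : Matrix (Fin m) (Fin n) ℝ) :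
    traceNorm (A + B) ≤ traceNorm A + traceNorm B := by
  have hW := l2_opNorm_polarFactor_le_one (A + B)
  rw [← inner'_polarFactor_self, inner'_add_right]
  exact add_le_add (inner'_le_traceNorm_of_l2_opNorm_le_one hW A)
    (inner'_le_traceNorm_of_l2_opNorm_le_one hW B)

@[simp] lemma traceNorm_zero : traceNorm (0 : Matrix (Fin m) (Fin n) ℝ) = 0 := by
  rw [← inner'_polarFactor_self, inner'_zero_right]

lemma traceNorm_vecMulVec_le (x : Fin m → ℝ) (y : Fin n → ℝ) :
    traceNorm (Matrix.vecMulVec x y) ≤ ‖toLp 2 x‖ * ‖toLp 2 y‖ := by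
  set W := polarFactor (Matrix.vecMulVec x y)
  rw [← inner'_polarFactor_self, inner'_vecMulVec]
  calc x ⬝ᵥ (W *ᵥ y) ≤ ‖toLp 2 x‖ * ‖toLp 2 (W *ᵥ y)‖ := dotProduct_le_norm_mul_norm _ _
    _ ≤ ‖toLp 2 x‖ * (1 * ‖toLp 2 y‖) := by
        gcongr
        exact (norm_mulVec_le W y).trans (by gcongr; exact l2_opNorm_polarFactor_le_one _)
    _ = ‖toLp 2 x‖ * ‖toLp 2 y‖ := by rw [one_mul]

lemma l2_opNorm_le_one_of_forall_inner'_le_traceNorm {Q : Matrix (Fin m) (Fin n) ℝ}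
    (hQ : ∀ M, inner' Q M ≤ traceNorm M) : ‖Q‖ ≤ 1 := by
  refine l2_opNorm_le_of_norm_mulVec_le zero_le_one fun y => ?_
  set z := Q *ᵥ y
  have h : ‖toLp 2 z‖ ^ 2 ≤ ‖toLp 2 z‖ * ‖toLp 2 y‖ := by
    calc ‖toLp 2 z‖ ^ 2 = inner' Q (Matrix.vecMulVec z y) := by rw [norm_toLp_sq, inner'_vecMulVec]
      _ ≤ ‖toLp 2 z‖ * ‖toLp 2 y‖ := (hQ _).trans (traceNorm_vecMulVec_le z y)
  nlinarith [norm_nonneg (toLp 2 z), norm_nonneg (toLp 2 y)]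

lemma inner'_le_traceNorm_of_subgradient {X₀ Q : Matrix (Fin m) (Fin n) ℝ}
    (hQ : ∀ X, traceNorm X₀ + inner' Q (X - X₀) ≤ traceNorm X) (M : Matrix (Fin m) (Fin n) ℝ) :
    inner' Q M ≤ traceNorm M := by
  have h := hQ (X₀ + M)
  rw [add_sub_cancel_left] at h
  linarith [traceNorm_add_le X₀ M]

lemma traceNorm_le_inner'_of_subgradient {X₀ Q : Matrix (Fin m) (Fin n) ℝ}
    (hQ : ∀ X, traceNorm X₀ + inner' Q (X - X₀) ≤ traceNorm X) : traceNorm X₀ ≤ inner' Q X₀ := by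
  have h := hQ 0
  rw [inner'_sub_right, inner'_zero_right, traceNorm_zero] at h
  linarith

section Projections

structure IsOrthProj (P : Matrix (Fin m) (Fin n) ℝ → Matrix (Fin m) (Fin n) ℝ) : Prop where
  inner'_map_left : ∀ A B, inner' (P A) B = inner' A (P B)
  map_sub_self : ∀ A, P (A - P A) = 0

theorem IsOrthProj.inner'_eq {P : Matrix (Fin m) (Fin n) ℝ → Matrix (Fin m) (Fin n) ℝ}
    (hP : IsOrthProj P) (A B : Matrix (Fin m) (Fin n) ℝ) :
    inner' A B = inner' (P A) B + inner' (A - P A) (B - P B) := by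
  rw [inner'_sub_left, hP.inner'_map_left A (B - P B), hP.map_sub_self, inner'_zero_right,
    inner'_sub_right, hP.inner'_map_left]
  ring

lemma isOrthProj_POmega (X : Matrix (Fin m) (Fin n) ℝ) : IsOrthProj (POmega X) where
  inner'_map_left A B := by
    simp only [inner', POmega, Matrix.of_apply]
    exact Finset.sum_congr rfl fun i _ => Finset.sum_congr rfl fun j _ => by split_ifs <;> simp
  map_sub_self A := by
    ext i j
    simp only [POmega, Matrix.of_apply, Matrix.sub_apply, Matrix.zero_apply]
    split_ifs <;> simp

lemma POmega_self (X : Matrix (Fin m) (Fin n) ℝ) : POmega X X = X := by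
  ext i j
  simp only [POmega, Matrix.of_apply]
  split_ifs with h <;> simp_all

lemma POmega_sub (X A B : Matrix (Fin m) (Fin n) ℝ) :
    POmega X (A - B) = POmega X A - POmega X B := by
  ext i j
  simp only [POmega, Matrix.of_apply, Matrix.sub_apply]
  split_ifs <;> simp

lemma l1_eq_l1_POmega_add_l1_sub (X M : Matrix (Fin m) (Fin n) ℝ) :
    l1 M = l1 (POmega X M) + l1 (M - POmega X M) := by
  simp only [l1, ← Finset.sum_add_distrib]
  refine Finset.sum_congr rfl fun i _ => Finset.sum_congr rfl fun j _ => ?_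
  simp only [POmega, Matrix.of_apply, Matrix.sub_apply]
  split_ifs <;> simp

lemma l1_nonneg (M : Matrix (Fin m) (Fin n) ℝ) : 0 ≤ l1 M :=
  Finset.sum_nonneg fun _ _ => Finset.sum_nonneg fun _ _ => abs_nonneg _

lemma abs_le_linf (M : Matrix (Fin m) (Fin n) ℝ) (i : Fin m) (j : Fin n) : |M i j| ≤ linf M :=
  (le_ciSup (Set.finite_range _).bddAbove j).trans
    (le_ciSup (f := fun i => ⨆ j, |M i j|) (Set.finite_range _).bddAbove i)

lemma inner'_le_linf_mul_l1 (A B : Matrix (Fin m) (Fin n) ℝ) : inner' A B ≤ linf A * l1 B := by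
  simp only [inner', l1, Finset.mul_sum]
  refine Finset.sum_le_sum fun i _ => Finset.sum_le_sum fun j _ => ?_
  calc A i j * B i j ≤ |A i j| * |B i j| := (le_abs_self _).trans (abs_mul _ _).le
    _ ≤ linf A * |B i j| := by gcongr; exact abs_le_linf A i j

end Projections

section TangentSpace

variable {U : Matrix (Fin m) (Fin r) ℝ} {V : Matrix (Fin n) (Fin r) ℝ}

lemma inner'_PT_left (A B : Matrix (Fin m) (Fin n) ℝ) :
    inner' (PT U V A) B = inner' A (PT U V B) := by
  simp only [PT, inner'_add_left, inner'_sub_left, inner'_add_right, inner'_sub_right,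
    inner'_mul_left, inner'_mul_right]
  simp only [Matrix.transpose_mul, Matrix.transpose_transpose, Matrix.mul_assoc]

lemma PT_eq_zero {M : Matrix (Fin m) (Fin n) ℝ} (hUM : Uᵀ * M = 0) (hMV : M * V = 0) :
    PT U V M = 0 := by
  simp only [PT, Matrix.mul_assoc, hUM, ← Matrix.mul_assoc M, hMV]
  simp

lemma transpose_mul_sub_PT (hU : Uᵀ * U = 1) (M : Matrix (Fin m) (Fin n) ℝ) :
    Uᵀ * (M - PT U V M) = 0 := by
  have hU' : ∀ X : Matrix (Fin r) (Fin n) ℝ, Uᵀ * (U * X) = X := fun X => by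
    rw [← Matrix.mul_assoc, hU, Matrix.one_mul]
  simp only [PT, Matrix.mul_sub, Matrix.mul_add, Matrix.mul_assoc, hU']
  abel

lemma sub_PT_mul (hV : Vᵀ * V = 1) (M : Matrix (Fin m) (Fin n) ℝ) :
    (M - PT U V M) * V = 0 := by
  have hV' : ∀ X : Matrix (Fin m) (Fin n) ℝ, X * (V * (Vᵀ * V)) = X * V := fun X => by
    rw [hV, Matrix.mul_one]
  simp only [PT, Matrix.sub_mul, Matrix.add_mul, Matrix.mul_assoc, hV']
  abel

lemma isOrthProj_PT (hU : Uᵀ * U = 1) (hV : Vᵀ * V = 1) : IsOrthProj (PT U V) where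
  inner'_map_left := inner'_PT_left
  map_sub_self M := PT_eq_zero (transpose_mul_sub_PT hU M) (sub_PT_mul hV M)

lemma PT_mul_mul_transpose (hU : Uᵀ * U = 1) (hV : Vᵀ * V = 1) (D : Matrix (Fin r) (Fin r) ℝ) :
    PT U V (U * D * Vᵀ) = U * D * Vᵀ := by
  have hU' : ∀ X : Matrix (Fin r) (Fin n) ℝ, Uᵀ * (U * X) = X := fun X => by
    rw [← Matrix.mul_assoc, hU, Matrix.one_mul]
  have hV' : ∀ Y : Matrix (Fin r) (Fin n) ℝ, Vᵀ * (V * Y) = Y := fun Y => by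
    rw [← Matrix.mul_assoc, hV, Matrix.one_mul]
  simp only [PT, Matrix.mul_assoc, hU', hV']
  abel

theorem l2_opNorm_mul_transpose_add_le_one (hU : Uᵀ * U = 1) (hV : Vᵀ * V = 1)
    {W : Matrix (Fin m) (Fin n) ℝ} (hUW : Uᵀ * W = 0) (hWV : W * V = 0) (hW : ‖W‖ ≤ 1) :
    ‖U * Vᵀ + W‖ ≤ 1 := by
  refine l2_opNorm_le_of_norm_mulVec_le zero_le_one fun x => ?_
  set a := Vᵀ *ᵥ x
  set y := x - V *ᵥ a
  have hWy : W *ᵥ y = W *ᵥ x := by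
    rw [Matrix.mulVec_sub, Matrix.mulVec_mulVec, hWV, Matrix.zero_mulVec, sub_zero]
  have hx : (U * Vᵀ + W) *ᵥ x = U *ᵥ a + W *ᵥ y := by
    rw [hWy, Matrix.add_mulVec, ← Matrix.mulVec_mulVec]
  -- `U a ⟂ W y`, and `y` is the component of `x` orthogonal to the columns of `V`
  have hUa : (U *ᵥ a) ⬝ᵥ (U *ᵥ a) = a ⬝ᵥ a := by
    rw [mulVec_dotProduct_mulVec, hU, Matrix.one_mulVec]
  have hUaWy : (U *ᵥ a) ⬝ᵥ (W *ᵥ y) = 0 := by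
    rw [mulVec_dotProduct_mulVec, hUW, Matrix.zero_mulVec, dotProduct_zero]
  have hy : y ⬝ᵥ y = x ⬝ᵥ x - a ⬝ᵥ a := by
    have hVa : (V *ᵥ a) ⬝ᵥ (V *ᵥ a) = a ⬝ᵥ a := by
      rw [mulVec_dotProduct_mulVec, hV, Matrix.one_mulVec]
    have hxVa : x ⬝ᵥ (V *ᵥ a) = a ⬝ᵥ a := by
      rw [Matrix.dotProduct_mulVec, ← Matrix.mulVec_transpose]
    simp only [y, sub_dotProduct, dotProduct_sub, hVa, hxVa, dotProduct_comm (V *ᵥ a) x]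
    ring
  have hWy_le : (W *ᵥ y) ⬝ᵥ (W *ᵥ y) ≤ y ⬝ᵥ y := by
    rw [← norm_toLp_sq, ← norm_toLp_sq]
    gcongr
    exact (norm_mulVec_le W y).trans (mul_le_of_le_one_left (norm_nonneg _) hW)
  have hsq : ‖toLp 2 ((U * Vᵀ + W) *ᵥ x)‖ ^ 2 ≤ ‖toLp 2 x‖ ^ 2 := by
    rw [norm_toLp_sq, norm_toLp_sq, hx, add_dotProduct, dotProduct_add, dotProduct_add,
      dotProduct_comm (W *ᵥ y), hUa, hUaWy]
    linarith
  rw [one_mul]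
  exact (pow_le_pow_iff_left₀ (norm_nonneg _) (norm_nonneg _) two_ne_zero).mp hsq

lemma diag_transpose_mul_mul_le_one (hU : Uᵀ * U = 1) (hV : Vᵀ * V = 1)
    {Q : Matrix (Fin m) (Fin n) ℝ} (hQ : ‖Q‖ ≤ 1) (i : Fin r) : (Uᵀ * Q * V) i i ≤ 1 := by
  rw [diag_transpose_mul_mul]
  calc Uᵀ i ⬝ᵥ (Q *ᵥ Vᵀ i) ≤ ‖toLp 2 (Uᵀ i)‖ * ‖toLp 2 (Q *ᵥ Vᵀ i)‖ :=
        dotProduct_le_norm_mul_norm _ _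
    _ ≤ 1 * (1 * 1) := by
        rw [norm_col_eq_one hU]
        gcongr
        exact (norm_mulVec_le Q _).trans (by rw [norm_col_eq_one hV]; gcongr)
    _ = 1 := by norm_num

lemma mul_eq_of_diag_transpose_mul_mul_eq_one (hU : Uᵀ * U = 1) (hV : Vᵀ * V = 1)
    {Q : Matrix (Fin m) (Fin n) ℝ} (hQ : ‖Q‖ ≤ 1) (h : ∀ i, (Uᵀ * Q * V) i i = 1) : Q * V = U := by
  refine Matrix.transpose_inj.mp (funext fun i => ?_)
  rw [col_mul]
  refine eq_of_norm_le_one_of_dotProduct_eq_one ?_ (norm_col_eq_one hU i)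
    ((diag_transpose_mul_mul U Q V i).symm.trans (h i))
  exact (norm_mulVec_le Q _).trans (by rw [norm_col_eq_one hV, mul_one]; exact hQ)

lemma diag_transpose_mul_mul_eq_one {σ : Fin r → ℝ} (hσ : ∀ i, 0 < σ i) (hU : Uᵀ * U = 1)
    (hV : Vᵀ * V = 1) {Q : Matrix (Fin m) (Fin n) ℝ} (hQ : ‖Q‖ ≤ 1)
    (hQX : traceNorm (U * Matrix.diagonal σ * Vᵀ) ≤ inner' Q (U * Matrix.diagonal σ * Vᵀ))
    (i : Fin r) : (Uᵀ * Q * V) i i = 1 := by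
  have hUV : ‖U * Vᵀ‖ ≤ 1 := (Matrix.l2_opNorm_mul U Vᵀ).trans <| by
    rw [l2_opNorm_transpose]
    exact mul_le_one₀ (l2_opNorm_le_one_of_transpose_mul_self hU) (norm_nonneg V)
      (l2_opNorm_le_one_of_transpose_mul_self hV)
  have hsum : ∑ i, σ i ≤ ∑ i, σ i * (Uᵀ * Q * V) i i := by
    have h := (inner'_le_traceNorm_of_l2_opNorm_le_one hUV _).trans hQX
    have hUUVV : Uᵀ * (U * Vᵀ) * V = 1 := by rw [← Matrix.mul_assoc, hU, Matrix.one_mul, hV]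
    simpa [inner'_mul_diagonal_mul, hUUVV] using h
  have hle : ∀ i ∈ Finset.univ, σ i * (Uᵀ * Q * V) i i ≤ σ i := fun i _ =>
    mul_le_of_le_one_right (hσ i).le (diag_transpose_mul_mul_le_one hU hV hQ i)
  have heq := (Finset.sum_eq_sum_iff_of_le hle).mp ((Finset.sum_le_sum hle).antisymm hsum)
    i (Finset.mem_univ i)
  exact (mul_eq_left₀ (hσ i).ne').mp heq

lemma PT_eq_mul_transpose (hV : Vᵀ * V = 1) {Q : Matrix (Fin m) (Fin n) ℝ} (hQV : Q * V = U)
    (hUQ : Uᵀ * Q = Vᵀ) : PT U V Q = U * Vᵀ := by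
  have hV' : Vᵀ * (V * Vᵀ) = Vᵀ := by rw [← Matrix.mul_assoc, hV, Matrix.one_mul]
  simp only [PT, Matrix.mul_assoc, hUQ, hV', ← Matrix.mul_assoc Q, hQV]
  abel

theorem PT_eq_of_traceNorm_le_inner' {σ : Fin r → ℝ} (hσ : ∀ i, 0 < σ i) (hU : Uᵀ * U = 1)
    (hV : Vᵀ * V = 1) {Q : Matrix (Fin m) (Fin n) ℝ} (hQ : ‖Q‖ ≤ 1)
    (hQX : traceNorm (U * Matrix.diagonal σ * Vᵀ) ≤ inner' Q (U * Matrix.diagonal σ * Vᵀ)) :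
    PT U V Q = U * Vᵀ := by
  have hdiag := diag_transpose_mul_mul_eq_one hσ hU hV hQ hQX
  refine PT_eq_mul_transpose hV (mul_eq_of_diag_transpose_mul_mul_eq_one hU hV hQ hdiag) ?_
  have hQt : Qᵀ * U = V := by
    refine mul_eq_of_diag_transpose_mul_mul_eq_one hV hU (by rwa [l2_opNorm_transpose]) fun i => ?_
    rw [← hdiag i, ← Matrix.transpose_apply (Uᵀ * Q * V)]
    simp only [Matrix.transpose_mul, Matrix.transpose_transpose, Matrix.mul_assoc]
  rw [← Matrix.transpose_transpose Q, ← Matrix.transpose_mul, hQt]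

theorem exists_dual_certificate (hU : Uᵀ * U = 1) (hV : Vᵀ * V = 1)
    (Δ : Matrix (Fin m) (Fin n) ℝ) :
    ∃ W, ‖U * Vᵀ + W‖ ≤ 1 ∧ PT U V W = 0 ∧ inner' W Δ = traceNorm (Δ - PT U V Δ) := by
  set N := Δ - PT U V Δ
  have hUW := mul_polarFactor_eq_zero N (transpose_mul_sub_PT hU Δ)
  have hWV := polarFactor_mul_eq_zero N (sub_PT_mul hV Δ)
  have hPW := PT_eq_zero hUW hWV
  refine ⟨polarFactor N, l2_opNorm_mul_transpose_add_le_one hU hV hUW hWV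
    (l2_opNorm_polarFactor_le_one N), hPW, ?_⟩
  rw [(isOrthProj_PT hU hV).inner'_eq, hPW, inner'_zero_left, zero_add, sub_zero,
    inner'_polarFactor_self]

end TangentSpace

theorem inner'_add_l1_le_of_subgradient {lam κ : ℝ} {X₀ Q : Matrix (Fin m) (Fin n) ℝ}
    (hQ : ∀ X, lam * l1 X₀ + inner' Q (X - X₀) ≤ lam * l1 X)
    (hQκ : linf (Q - POmega X₀ Q) ≤ κ) (X : Matrix (Fin m) (Fin n) ℝ) :
    inner' Q (X - X₀) + (lam - κ) * l1 (X - X₀ - POmega X₀ (X - X₀))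
      ≤ lam * l1 X - lam * l1 X₀ := by
  set Δ := X - X₀
  set R := Δ - POmega X₀ Δ
  have hP := isOrthProj_POmega X₀
  have hPX : POmega X₀ X - X₀ = POmega X₀ Δ := by rw [POmega_sub, POmega_self]
  have hsplit : l1 X = l1 (POmega X₀ X) + l1 R := by
    rw [l1_eq_l1_POmega_add_l1_sub X₀ X]
    congr 2
    simp only [R, Δ, POmega_sub, POmega_self]
    abel
  have hsub := hQ (POmega X₀ X)
  rw [hPX, ← hP.inner'_map_left] at hsub
  have hR : inner' (Q - POmega X₀ Q) R ≤ κ * l1 R :=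
    (inner'_le_linf_mul_l1 _ _).trans (mul_le_mul_of_nonneg_right hQκ (l1_nonneg R))
  rw [hP.inner'_eq Q Δ, hsplit]
  linear_combination hsub + hR

theorem inner'_add_traceNorm_le_of_subgradient {U : Matrix (Fin m) (Fin r) ℝ}
    {V : Matrix (Fin n) (Fin r) ℝ} {σ : Fin r → ℝ} (hσ : ∀ i, 0 < σ i) (hU : Uᵀ * U = 1)
    (hV : Vᵀ * V = 1) {κ : ℝ} {Q : Matrix (Fin m) (Fin n) ℝ}
    (hQ : ∀ X, traceNorm (U * Matrix.diagonal σ * Vᵀ) + inner' Q (X - U * Matrix.diagonal σ * Vᵀ)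
      ≤ traceNorm X)
    (hQκ : ‖Q - PT U V Q‖ ≤ κ) (X : Matrix (Fin m) (Fin n) ℝ) :
    inner' Q (X - U * Matrix.diagonal σ * Vᵀ)
        + (1 - κ) * traceNorm (X - U * Matrix.diagonal σ * Vᵀ
          - PT U V (X - U * Matrix.diagonal σ * Vᵀ))
      ≤ traceNorm X - traceNorm (U * Matrix.diagonal σ * Vᵀ) := by
  set X₀ := U * Matrix.diagonal σ * Vᵀ
  set Δ := X - X₀
  have hP := isOrthProj_PT hU hV
  have hPX₀ : PT U V X₀ = X₀ := PT_mul_mul_transpose hU hV _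
  have hQX₀ := traceNorm_le_inner'_of_subgradient hQ
  have hPQ : PT U V Q = U * Vᵀ := PT_eq_of_traceNorm_le_inner' hσ hU hV
    (l2_opNorm_le_one_of_forall_inner'_le_traceNorm (inner'_le_traceNorm_of_subgradient hQ)) hQX₀
  obtain ⟨W, hW, hPW, hWΔ⟩ := exists_dual_certificate hU hV Δ
  have hWX₀ : inner' W X₀ = 0 := by rw [← hPX₀, ← inner'_PT_left, hPW, inner'_zero_left]
  have hUVX₀ : inner' (U * Vᵀ) X₀ = inner' Q X₀ := by rw [← hPQ, inner'_PT_left, hPX₀]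
  rw [hPQ] at hQκ
  have hQΔ : inner' (Q - U * Vᵀ) (Δ - PT U V Δ) ≤ κ * traceNorm (Δ - PT U V Δ) :=
    (inner'_le_l2_opNorm_mul_traceNorm _ _).trans
      (mul_le_mul_of_nonneg_right hQκ (traceNorm_nonneg _))
  have hX := inner'_le_traceNorm_of_l2_opNorm_le_one hW X
  have hsplit : inner' (U * Vᵀ + W) X
      = inner' (U * Vᵀ) X₀ + inner' (U * Vᵀ) Δ + inner' W X₀ + inner' W Δ := by
    rw [← add_sub_cancel X₀ X, inner'_add_left, inner'_add_right, inner'_add_right]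
    ring
  rw [hP.inner'_eq Q Δ, hPQ]
  linear_combination hX + hQΔ + hQX₀ - hsplit - hUVX₀ - hWX₀ - hWΔ

theorem approx_subgradient_decomposition_general {m n r : ℕ} (lam c : ℝ)
    (Xs Xl : Matrix (Fin m) (Fin n) ℝ)
    (U : Matrix (Fin m) (Fin r) ℝ) (V : Matrix (Fin n) (Fin r) ℝ) (σ : Fin r → ℝ)
    (hσ : ∀ i, 0 < σ i) (hU : Uᵀ * U = 1) (hV : Vᵀ * V = 1)
    (hXl : Xl = U * Matrix.diagonal σ * Vᵀ)
    (Q : Matrix (Fin m) (Fin n) ℝ)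
    (hQ1 : ∀ X, lam * l1 Xs + inner' Q (X - Xs) ≤ lam * l1 X)
    (hQ2 : ∀ X, traceNorm Xl + inner' Q (X - Xl) ≤ traceNorm X)
    (hQ3 : linf (Q - POmega Xs Q) ≤ lam / c)
    (hQ4 : spec (Q - PT U V Q) ≤ 1 / c) :
    ∀ XS XL : Matrix (Fin m) (Fin n) ℝ,
      inner' Q (XS + XL - Xs - Xl)
        + (1 - 1 / c) * (lam * l1 ((XS - Xs) - POmega Xs (XS - Xs))
            + traceNorm ((XL - Xl) - PT U V (XL - Xl)))
      ≤ lam * l1 XS + traceNorm XL - lam * l1 Xs - traceNorm Xl := by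
  intro XS XL
  subst hXl
  rw [spec_eq_l2_opNorm] at hQ4
  have hS := inner'_add_l1_le_of_subgradient hQ1 hQ3 XS
  have hL := inner'_add_traceNorm_le_of_subgradient hσ hU hV hQ2 hQ4 XL
  rw [show XS + XL - Xs - U * Matrix.diagonal σ * Vᵀ
      = (XS - Xs) + (XL - U * Matrix.diagonal σ * Vᵀ) by abel, inner'_add_right]
  linear_combination hS + hL

/-- approximate-subgradient error decomposition. -/
theorem approx_subgradient_decomposition {m n r : ℕ} (lam c : ℝ)
    (hlam : 0 < lam) (hc : 1 < c)
    (Xs Xl : Matrix (Fin m) (Fin n) ℝ)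
    (U : Matrix (Fin m) (Fin r) ℝ) (V : Matrix (Fin n) (Fin r) ℝ) (σ : Fin r → ℝ)
    (hσ : ∀ i, 0 < σ i) (hU : Uᵀ * U = 1) (hV : Vᵀ * V = 1)
    (hXl : Xl = U * Matrix.diagonal σ * Vᵀ)
    (Q : Matrix (Fin m) (Fin n) ℝ)
    (hQ1 : ∀ X, lam * l1 Xs + inner' Q (X - Xs) ≤ lam * l1 X)
    (hQ2 : ∀ X, traceNorm Xl + inner' Q (X - Xl) ≤ traceNorm X)
    (hQ3 : linf (Q - POmega Xs Q) ≤ lam / c)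
    (hQ4 : spec (Q - PT U V Q) ≤ 1 / c) :
    ∀ XS XL : Matrix (Fin m) (Fin n) ℝ,
      inner' Q (XS + XL - Xs - Xl)
        + (1 - 1 / c) * (lam * l1 ((XS - Xs) - POmega Xs (XS - Xs))
            + traceNorm ((XL - Xl) - PT U V (XL - Xl)))
      ≤ lam * l1 XS + traceNorm XL - lam * l1 Xs - traceNorm Xl :=
  approx_subgradient_decomposition_general lam c Xs Xl U V σ hσ hU hV hXl Q hQ1 hQ2 hQ3 hQ4

end SLR
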